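/- Let C ⊆ ℝⁿ be a polytope and f convex and differentiable on an open set containing C with L-curvature (f(x + η(v - x)) ≤ f(x) + η⟨∇f(x), v - x⟩ + Lη²/2 for x ∈ C, v ∈ C, η ∈ [0,1]). Suppose (C, f) satisfies the (μ, 1/2)-error bound relative to the radial distance r. Then the iterates of the vanilla Frank-Wolfe algorithm with short-step satisfy f(x^{(t)}) - f* ≤ (f(x^{(0)}) - f*)(1 - min{μ/(2L), 1/2})^t for all t ∈ ℕ. -/

import Mathlib

/-!
Write `g = ⟨∇f x, x - v⟩` for the Frank-Wolfe gap. By convexity, if `z - x = ρ (w - x)` with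
`w ∈ C` and `ρ ≥ 0`, then `f x - f z ≤ ρ ⟨∇f x, x - w⟩ ≤ ρ g`. Taking `z` optimal and infimizing
over `ρ` and `z`, the error bound gives `f x - f* ≤ ((f x - f*) / μ)^{1/2} g`, i.e.
`μ (f x - f*) ≤ g²`; taking `ρ = 1` gives `f x - f* ≤ g`. The short step decreases `f` by at least
`min {g² / (2L), g / 2}`, hence by at least `min {μ / (2L), 1/2} (f x - f*)`.
-/

noncomputable def radialDist {E : Type*} [NormedAddCommGroup E] [NormedSpace ℝ E]
    (C : Set E) (y x : E) : ℝ :=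
  sInf {ρ : ℝ | 0 ≤ ρ ∧ ∃ v ∈ C, y - x = ρ • (v - x)}

open Set AffineMap

theorem le_csInf_mul_of_forall_le_mul {S : Set ℝ} (hS : S.Nonempty) {a b : ℝ} (hb : 0 ≤ b)
    (h : ∀ ρ ∈ S, a ≤ ρ * b) : a ≤ sInf S * b := by
  rcases hb.eq_or_lt with rfl | hb
  · obtain ⟨ρ, hρ⟩ := hS
    simpa using h ρ hρ
  · rw [← div_le_iff₀ hb]
    exact le_csInf hS fun ρ hρ => (div_le_iff₀ hb).2 (h ρ hρ)

theorem mul_le_sq_of_le_rpow_half_mul {h g μ : ℝ} (hh : 0 ≤ h) (hμ : 0 < μ)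
    (hle : h ≤ (h / μ) ^ (1 / 2 : ℝ) * g) : μ * h ≤ g ^ 2 := by
  rw [← Real.sqrt_eq_rpow] at hle
  have hsq : h ^ 2 ≤ h / μ * g ^ 2 := by
    calc h ^ 2 ≤ (√(h / μ) * g) ^ 2 := pow_le_pow_left₀ hh hle 2
      _ = h / μ * g ^ 2 := by rw [mul_pow, Real.sq_sqrt (by positivity)]
  rcases hh.eq_or_lt with rfl | hh
  · simp [sq_nonneg]
  · rw [div_mul_eq_mul_div, le_div_iff₀ hμ] at hsq
    nlinarith

theorem min_one_div_short_step_le {L g : ℝ} (hL : 0 < L) :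
    min 1 (g / L) * -g + L * min 1 (g / L) ^ 2 / 2 ≤ -min (g ^ 2 / (2 * L)) (g / 2) := by
  rcases le_total 1 (g / L) with hgL | hgL
  · rw [min_eq_left hgL]
    rw [le_div_iff₀ hL, one_mul] at hgL
    linarith [min_le_right (g ^ 2 / (2 * L)) (g / 2)]
  · rw [min_eq_right hgL]
    have : g / L * -g + L * (g / L) ^ 2 / 2 = -(g ^ 2 / (2 * L)) := by
      field_simp
      ring
    linarith [min_le_left (g ^ 2 / (2 * L)) (g / 2)]

theorem sub_min_le_one_sub_min_mul {L μ g h : ℝ} (hL : 0 < L) (hh : 0 ≤ h) (hhg : h ≤ g)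
    (hscale : μ * h ≤ g ^ 2) :
    h - min (g ^ 2 / (2 * L)) (g / 2) ≤ (1 - min (μ / (2 * L)) (1 / 2)) * h := by
  have : min (μ / (2 * L) * h) (1 / 2 * h) ≤ min (g ^ 2 / (2 * L)) (g / 2) :=
    min_le_min (by rw [div_mul_eq_mul_div]; gcongr) (by linarith)
  rw [sub_mul, one_mul, min_mul_of_nonneg _ _ hh]
  linarith

section FrankWolfe

variable {E : Type*} [NormedAddCommGroup E] [NormedSpace ℝ E] {C : Set E} {f : E → ℝ}
  {φ : E →L[ℝ] ℝ} {x v z : E}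

theorem ConvexOn.apply_sub_le_of_hasFDerivAt (hf : ConvexOn ℝ C f) (hx : x ∈ C) (hz : z ∈ C)
    (hφ : HasFDerivAt f φ x) : φ (z - x) ≤ f z - f x := by
  let l : ℝ →ᵃ[ℝ] E := lineMap x z
  have hline : ConvexOn ℝ (l ⁻¹' C) (f ∘ l) := hf.comp_affineMap l
  have hderiv : HasDerivAt (f ∘ l) (φ (z - x)) 0 :=
    hφ.comp_hasDerivAt_of_eq 0 hasDerivAt_lineMap (lineMap_apply_zero x z).symm
  simpa [slope_def_field, l] using
    hline.le_slope_of_hasDerivAt (by simpa [l]) (by simpa [l]) zero_lt_one hderiv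

theorem frankWolfe_gap_nonneg (hv : IsMinOn φ C v) (hx : x ∈ C) : 0 ≤ φ (x - v) := by
  rw [map_sub, sub_nonneg]
  exact isMinOn_iff.1 hv x hx

theorem sub_le_mul_frankWolfe_gap (hf : ConvexOn ℝ C f) (hφ : HasFDerivAt f φ x)
    (hv : IsMinOn φ C v) (hx : x ∈ C) (hz : z ∈ C) {w : E} (hw : w ∈ C) {ρ : ℝ} (hρ : 0 ≤ ρ)
    (hzw : z - x = ρ • (w - x)) : f x - f z ≤ ρ * φ (x - v) := by
  have hfirst := hf.apply_sub_le_of_hasFDerivAt hx hz hφ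
  have hvw : φ v ≤ φ w := isMinOn_iff.1 hv w hw
  rw [hzw, map_smul, smul_eq_mul] at hfirst
  simp only [map_sub] at hfirst ⊢
  nlinarith

theorem sub_le_radialDist_mul_frankWolfe_gap (hf : ConvexOn ℝ C f) (hφ : HasFDerivAt f φ x)
    (hv : IsMinOn φ C v) (hx : x ∈ C) (hz : z ∈ C) :
    f x - f z ≤ radialDist C z x * φ (x - v) := by
  refine le_csInf_mul_of_forall_le_mul ?_ (frankWolfe_gap_nonneg hv hx) ?_
  · exact ⟨1, zero_le_one, z, hz, (one_smul ℝ _).symm⟩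
  rintro ρ ⟨hρ, w, hw, hzw⟩
  exact sub_le_mul_frankWolfe_gap hf hφ hv hx hz hw hρ hzw

theorem mul_sub_le_frankWolfe_gap_sq (hf : ConvexOn ℝ C f) (hφ : HasFDerivAt f φ x)
    (hv : IsMinOn φ C v) (hx : x ∈ C) {fstar μ : ℝ} (hμ : 0 < μ) (hfx : fstar ≤ f x)
    {Xstar : Set E} (hXne : Xstar.Nonempty) (hX : Xstar ⊆ {z ∈ C | f z = fstar})
    (heb : ((f x - fstar) / μ) ^ ((1 : ℝ) / 2) ≥
      sInf {d : ℝ | ∃ z ∈ Xstar, d = radialDist C z x}) :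
    μ * (f x - fstar) ≤ φ (x - v) ^ 2 := by
  have hgap := frankWolfe_gap_nonneg hv hx
  have hradial : f x - fstar ≤ sInf {d : ℝ | ∃ z ∈ Xstar, d = radialDist C z x} * φ (x - v) := by
    obtain ⟨z₀, hz₀⟩ := hXne
    refine le_csInf_mul_of_forall_le_mul ?_ hgap ?_
    · exact ⟨radialDist C z₀ x, z₀, hz₀, rfl⟩
    rintro _ ⟨z, hz, rfl⟩
    obtain ⟨hzC, hfz⟩ := hX hz
    simpa [hfz] using sub_le_radialDist_mul_frankWolfe_gap hf hφ hv hx hzC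
  exact mul_le_sq_of_le_rpow_half_mul (sub_nonneg.2 hfx) hμ
    (hradial.trans (mul_le_mul_of_nonneg_right heb hgap))

theorem frankWolfe_shortStep_sub_le (hf : ConvexOn ℝ C f) (hφ : HasFDerivAt f φ x)
    (hv : IsMinOn φ C v) (hx : x ∈ C) {fstar L μ : ℝ} (hL : 0 < L) (hμ : 0 < μ)
    (hfx : fstar ≤ f x) {Xstar : Set E} (hXne : Xstar.Nonempty)
    (hX : Xstar ⊆ {z ∈ C | f z = fstar})
    (heb : ((f x - fstar) / μ) ^ ((1 : ℝ) / 2) ≥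
      sInf {d : ℝ | ∃ z ∈ Xstar, d = radialDist C z x})
    (hcurv : f (x + min 1 (φ (x - v) / L) • (v - x)) ≤
      f x + min 1 (φ (x - v) / L) * φ (v - x) + L * min 1 (φ (x - v) / L) ^ 2 / 2) :
    f (x + min 1 (φ (x - v) / L) • (v - x)) - fstar ≤
      (1 - min (μ / (2 * L)) (1 / 2)) * (f x - fstar) := by
  obtain ⟨zstar, hzstar⟩ := hXne
  obtain ⟨hzstarC, hfzstar⟩ := hX hzstar
  have hprimal : f x - fstar ≤ φ (x - v) := by
    simpa [hfzstar] using
      sub_le_mul_frankWolfe_gap hf hφ hv hx hzstarC hzstarC zero_le_one (one_smul ℝ _).symm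
  have hscale := mul_sub_le_frankWolfe_gap_sq hf hφ hv hx hμ hfx ⟨zstar, hzstar⟩ hX heb
  rw [← neg_sub x v, map_neg, neg_sub] at hcurv
  linarith [min_one_div_short_step_le (g := φ (x - v)) hL,
    sub_min_le_one_sub_min_mul hL (sub_nonneg.2 hfx) hprimal hscale]

end FrankWolfe

theorem stmt19_general {E : Type*} [NormedAddCommGroup E] [NormedSpace ℝ E]
    (C : Set E)
    (f : E → ℝ) (f' : E → E →L[ℝ] ℝ) (hdiff : ∀ x ∈ C, HasFDerivAt f (f' x) x)
    (hconv : ConvexOn ℝ C f)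
    (fstar : ℝ) (hfstar : IsLeast (f '' C) fstar)
    (Xstar : Set E) (hXstar : Xstar = {z ∈ C | f z = fstar})
    (L : ℝ) (hL : 0 < L)
    (hcurv : ∀ x ∈ C, ∀ u ∈ C, ∀ η ∈ Set.Icc (0 : ℝ) 1,
      f (x + η • (u - x)) ≤ f x + η * f' x (u - x) + L * η ^ 2 / 2)
    (μ : ℝ) (hμ : 0 < μ)
    (heb : ∀ x ∈ C,
      ((f x - fstar) / μ) ^ ((1 : ℝ) / 2) ≥
        sInf {d : ℝ | ∃ z ∈ Xstar, d = radialDist C z x})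
    (x v : ℕ → E) (η : ℕ → ℝ)
    (hx0 : x 0 ∈ C)
    (hv : ∀ t, v t ∈ C ∧ ∀ w ∈ C, f' (x t) (v t) ≤ f' (x t) w)
    (hη : ∀ t, η t = min 1 (f' (x t) (x t - v t) / L))
    (hupd : ∀ t, x (t + 1) = x t + η t • (v t - x t)) :
    ∀ t, f (x t) - fstar ≤
      (f (x 0) - fstar) * (1 - min (μ / (2 * L)) (1 / 2)) ^ t := by
  obtain ⟨zstar, hzstar, hfzstar⟩ := hfstar.1
  have hXne : Xstar.Nonempty := ⟨zstar, hXstar ▸ ⟨hzstar, hfzstar⟩⟩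
  have hmin t : IsMinOn (f' (x t)) C (v t) := isMinOn_iff.2 (hv t).2
  have hη01 t (hxt : x t ∈ C) : η t ∈ Icc 0 1 := by
    rw [hη t]
    exact ⟨le_min zero_le_one (div_nonneg (frankWolfe_gap_nonneg (hmin t) hxt) hL.le),
      min_le_left _ _⟩
  have hmem t : x t ∈ C := by
    induction t with
    | zero => exact hx0
    | succ t ih => exact hupd t ▸ hconv.1.add_smul_sub_mem ih (hv t).1 (hη01 t ih)
  have hcontract t : f (x (t + 1)) - fstar ≤
      (1 - min (μ / (2 * L)) (1 / 2)) * (f (x t) - fstar) := by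
    have hdescent := hcurv _ (hmem t) _ (hv t).1 _ (hη01 t (hmem t))
    rw [hη] at hdescent
    rw [hupd, hη]
    exact frankWolfe_shortStep_sub_le hconv (hdiff _ (hmem t)) (hmin t) (hmem t) hL hμ
      (hfstar.2 ⟨_, hmem t, rfl⟩) hXne hXstar.subset (heb _ (hmem t)) hdescent
  have hrate : 0 ≤ 1 - min (μ / (2 * L)) (1 / 2) := by
    linarith [min_le_right (μ / (2 * L)) (1 / 2)]
  intro t
  rw [mul_comm]
  exact le_geom (u := fun t => f (x t) - fstar) hrate t fun k _ => hcontract k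

/-- Linear convergence of the vanilla Frank-Wolfe algorithm with short-step under
`L`-curvature and the `(μ, 1/2)`-error bound relative to the radial distance:
`f(x⁽ᵗ⁾) - f* ≤ (f(x⁽⁰⁾) - f*) (1 - min{μ/(2L), 1/2})ᵗ`. -/
theorem stmt19 {E : Type*} [NormedAddCommGroup E] [NormedSpace ℝ E]
    (V : Finset E) (C : Set E) (hC : C = convexHull ℝ (V : Set E)) (hCne : C.Nonempty)
    (f : E → ℝ) (f' : E → E →L[ℝ] ℝ) (hdiff : ∀ x ∈ C, HasFDerivAt f (f' x) x)
    (hconv : ConvexOn ℝ C f)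
    (fstar : ℝ) (hfstar : IsLeast (f '' C) fstar)
    (Xstar : Set E) (hXstar : Xstar = {z ∈ C | f z = fstar})
    (L : ℝ) (hL : 0 < L)
    (hcurv : ∀ x ∈ C, ∀ u ∈ C, ∀ η ∈ Set.Icc (0 : ℝ) 1,
      f (x + η • (u - x)) ≤ f x + η * f' x (u - x) + L * η ^ 2 / 2)
    (μ : ℝ) (hμ : 0 < μ)
    (heb : ∀ x ∈ C,
      ((f x - fstar) / μ) ^ ((1 : ℝ) / 2) ≥
        sInf {d : ℝ | ∃ z ∈ Xstar, d = radialDist C z x})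
    (x v : ℕ → E) (η : ℕ → ℝ)
    (hx0 : x 0 ∈ C)
    (hv : ∀ t, v t ∈ C ∧ ∀ w ∈ C, f' (x t) (v t) ≤ f' (x t) w)
    (hη : ∀ t, η t = min 1 (f' (x t) (x t - v t) / L))
    (hupd : ∀ t, x (t + 1) = x t + η t • (v t - x t)) :
    ∀ t, f (x t) - fstar ≤
      (f (x 0) - fstar) * (1 - min (μ / (2 * L)) (1 / 2)) ^ t :=
  stmt19_general C f f' hdiff hconv fstar hfstar Xstar hXstar L hL hcurv μ hμ heb x v η hx0 hv hη
    hupd
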